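/- Let F be a field, k < n, and suppose k divides δ; set m = δ/k and L = δ/k + ⌊δ/(n-k)⌋. Let G(z) = Σ_{i=0}^{m} G_i z^i ∈ F[z]^{k×n}, and let G_L^c ∈ F^{(L+1)k×(L+1)n} be the upper block-triangular sliding matrix with (a,b)-block G_{b-a} for 0 ≤ a ≤ b ≤ L (zero for b-a > m or b < a). If every full-size minor of G_L^c formed by columns t_1 < ... < t_{(L+1)k} with t_{sk+1} > sn for s = 1,...,L is nonzero, then G(z) is left prime (and hence is the generator matrix of a noncatastrophic convolutional code). -/

import Mathlib

/-! Take the `(L + 1) * k` consecutive columns of `G_L^c` starting at column `m * n`. Because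
`δ < (⌊δ/(n-k)⌋ + 1)(n - k)` they fit into `G_L^c`, and because `⌊δ/(n-k)⌋ (n - k) ≤ δ` they satisfy
the admissibility condition, so the corresponding minor is nonzero. Hence every vector, in
particular each unit vector of the last block row, is `G_L^c x` for some `x` supported on block
columns `≥ m`. Reading such an `x` as the polynomial vector `∑_b x_b z^(L-b)`, the product
`G(z) x(z)` has degree `≤ L` and its coefficients are exactly the blocks of `G_L^c x`; so these
preimages form a polynomial right inverse of `G(z)`, and a matrix with a right inverse is left
prime. -/

open Polynomial Matrix

/-- A polynomial matrix `G` is left prime if in every factorization `G = M * G'`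
with `M` square polynomial, the left factor `M` is unimodular (a unit). -/
def IsLeftPrimeMat {F : Type*} [Field F] {p q : ℕ}
    (G : Matrix (Fin p) (Fin q) (Polynomial F)) : Prop :=
  ∀ (M : Matrix (Fin p) (Fin p) (Polynomial F))
    (G' : Matrix (Fin p) (Fin q) (Polynomial F)),
    G = M * G' → IsUnit M

theorem isLeftPrimeMat_of_mul_eq_one {F : Type*} [Field F] {p q : ℕ}
    {G : Matrix (Fin p) (Fin q) F[X]} {R : Matrix (Fin q) (Fin p) F[X]} (h : G * R = 1) :
    IsLeftPrimeMat G := fun M G' hMG =>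
  (isUnit_iff_isUnit_det M).2 <| isUnit_det_of_right_inverse (B := G' * R) <| by
    rw [← Matrix.mul_assoc, ← hMG, h]

section

variable {R : Type*} [CommSemiring R] {ι κ : Type*}

noncomputable def polyMatrix (G : ℕ → Matrix ι κ R) (m : ℕ) : Matrix ι κ R[X] :=
  of fun α β => ∑ s ∈ Finset.range (m + 1), C (G s α β) * X ^ s

def slidingGenMatrix (G : ℕ → Matrix ι κ R) (L : ℕ) :
    Matrix (Fin (L + 1) × ι) (Fin (L + 1) × κ) R :=
  of fun a b => if (a.1 : ℕ) ≤ b.1 then G (b.1 - a.1) a.2 b.2 else 0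

/-- Block `b` of `x` becomes the coefficient of `X ^ (L - b)`, so the last block row of the sliding
matrix produces constant terms. -/
noncomputable def blockPolyVec (L : ℕ) (x : Fin (L + 1) × κ → R) : κ → R[X] :=
  fun β => ∑ b : Fin (L + 1), C (x (b, β)) * X ^ (L - b)

theorem sum_C_mul_X_pow_mul_X_pow_eq {c : ℕ → R} {m b L : ℕ} (hc : ∀ s, m < s → c s = 0)
    (hmb : m ≤ b) (hbL : b ≤ L) :
    (∑ s ∈ Finset.range (m + 1), C (c s) * X ^ s) * X ^ (L - b) =
      ∑ a : Fin (L + 1), if (a : ℕ) ≤ b then C (c (b - a)) * X ^ (L - a) else 0 := by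
  have hlhs : ∑ s ∈ Finset.range (m + 1), C (c s) * X ^ s =
      ∑ s ∈ Finset.range (b + 1), C (c s) * X ^ s := by
    refine Finset.sum_subset (Finset.range_subset_range.2 (by omega)) fun s hs hsm => ?_
    simp only [Finset.mem_range] at hs hsm
    simp [hc s (by omega)]
  have hrhs : ∑ a : Fin (L + 1), (if (a : ℕ) ≤ b then C (c (b - a)) * X ^ (L - a) else 0) =
      ∑ a ∈ Finset.range (b + 1), C (c (b - a)) * X ^ (L - a) := by
    rw [Fin.sum_univ_eq_sum_range (fun a => if a ≤ b then C (c (b - a)) * X ^ (L - a) else 0),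
      ← Finset.sum_filter]
    congr 1
    ext a
    simp only [Finset.mem_filter, Finset.mem_range]
    omega
  rw [hlhs, hrhs, Finset.sum_mul, ← Finset.sum_range_reflect]
  refine Finset.sum_congr rfl fun a ha => ?_
  rw [Finset.mem_range] at ha
  rw [mul_assoc, ← pow_add, show b + 1 - 1 - a + (L - b) = L - a by omega,
    Nat.add_sub_cancel]

theorem polyMatrix_mulVec_blockPolyVec [Fintype κ] {G : ℕ → Matrix ι κ R} {m L : ℕ}
    (hGm : ∀ s, m < s → G s = 0) {x : Fin (L + 1) × κ → R}
    (hx : ∀ j, (j.1 : ℕ) < m → x j = 0) :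
    polyMatrix G m *ᵥ blockPolyVec L x = blockPolyVec L (slidingGenMatrix G L *ᵥ x) := by
  funext α
  have hblock : ∀ b β, (∑ s ∈ Finset.range (m + 1), C (G s α β) * X ^ s) *
      (C (x (b, β)) * X ^ (L - b)) =
      ∑ a : Fin (L + 1), C (slidingGenMatrix G L (a, α) (b, β) * x (b, β)) * X ^ (L - a) := by
    intro b β
    by_cases hb : (b : ℕ) < m
    · simp [hx (b, β) hb]
    rw [mul_left_comm, sum_C_mul_X_pow_mul_X_pow_eq (c := fun s => G s α β)
      (fun s hs => by simp [hGm s hs]) (not_lt.1 hb) (Nat.lt_succ_iff.1 b.2), Finset.mul_sum]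
    refine Finset.sum_congr rfl fun a _ => ?_
    simp only [slidingGenMatrix, of_apply]
    split_ifs
    · rw [C_mul]; ring
    · simp
  simp only [mulVec, dotProduct, blockPolyVec, polyMatrix, of_apply, Finset.mul_sum, hblock,
    Fintype.sum_prod_type, map_sum, Finset.sum_mul]
  rw [Finset.sum_comm]
  exact (Finset.sum_congr rfl fun b _ => Finset.sum_comm).trans Finset.sum_comm

theorem blockPolyVec_single_last [DecidableEq κ] (L : ℕ) (α : κ) :
    blockPolyVec L (Pi.single (Fin.last L, α) (1 : R)) = Pi.single α 1 := by
  funext β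
  rw [blockPolyVec, Finset.sum_eq_single (Fin.last L) (fun b _ hb => by simp [hb]) (by simp)]
  by_cases h : β = α
  · subst h; simp
  · simp [h]

theorem polyMatrix_mul_eq_one [Fintype κ] [DecidableEq ι] {G : ℕ → Matrix ι κ R} {m L : ℕ}
    (hGm : ∀ s, m < s → G s = 0) (x : ι → Fin (L + 1) × κ → R)
    (hx : ∀ α j, (j.1 : ℕ) < m → x α j = 0)
    (hsol : ∀ α, slidingGenMatrix G L *ᵥ x α = Pi.single (Fin.last L, α) 1) :
    polyMatrix G m * of (fun β α => blockPolyVec L (x α) β) = 1 := by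
  ext1 α' α
  change (polyMatrix G m *ᵥ blockPolyVec L (x α)) α' = _
  rw [polyMatrix_mulVec_blockPolyVec hGm (hx α), hsol, blockPolyVec_single_last, one_apply,
    Pi.single_apply]

end

theorem exists_mulVec_eq_of_det_submatrix_ne_zero {F ι κ : Type*} [Field F] [Fintype ι]
    [DecidableEq ι] [Fintype κ] [DecidableEq κ] {M : Matrix ι κ F} {c : ι → κ}
    (hdet : (M.submatrix id c).det ≠ 0) (v : ι → F) :
    ∃ x, M *ᵥ x = v ∧ ∀ j, j ∉ Set.range c → x j = 0 := by
  obtain ⟨y, hy⟩ := mulVec_surjective_iff_isUnit.2 ((isUnit_iff_isUnit_det _).2 hdet.isUnit) v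
  refine ⟨(1 : Matrix κ κ F).submatrix id c *ᵥ y, ?_, fun j hj => ?_⟩
  · rw [mulVec_mulVec, ← hy]
    simpa using congrArg (· *ᵥ y) (mul_submatrix_one (Equiv.refl κ) c M)
  · refine Finset.sum_eq_zero fun i _ => ?_
    exact mul_eq_zero_of_left (one_apply_ne fun h => hj ⟨i, h.symm⟩) _

theorem exists_polyMatrix_mul_eq_one {F ι κ : Type*} [Field F] [Fintype ι] [DecidableEq ι]
    [Fintype κ] [DecidableEq κ] {G : ℕ → Matrix ι κ F} {m L : ℕ} (hGm : ∀ s, m < s → G s = 0)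
    {c : Fin (L + 1) × ι → Fin (L + 1) × κ} (hc : ∀ i, m ≤ ((c i).1 : ℕ))
    (hdet : ((slidingGenMatrix G L).submatrix id c).det ≠ 0) :
    ∃ R : Matrix κ ι F[X], polyMatrix G m * R = 1 := by
  choose x hsol hsupp using fun α : ι =>
    exists_mulVec_eq_of_det_submatrix_ne_zero hdet (Pi.single (Fin.last L, α) 1)
  refine ⟨_, polyMatrix_mul_eq_one hGm x (fun α j hj => hsupp α j ?_) hsol⟩
  rintro ⟨i, rfl⟩
  exact absurd (hc i) (not_le.2 hj)

theorem sliding_window_fits {k n m L : ℕ} (hk : k < n) (hL : L = m + m * k / (n - k)) :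
    m * n + (L + 1) * k ≤ (L + 1) * n := by
  have hr := Nat.lt_mul_div_succ (m * k) (Nat.sub_pos_of_lt hk)
  obtain ⟨d, rfl⟩ := Nat.exists_eq_add_of_lt hk
  rw [show k + d + 1 - k = d + 1 by omega] at hL hr
  subst hL
  nlinarith

theorem sliding_window_admissible {k n m L s : ℕ} (hkn : k ≤ n) (hL : L = m + m * k / (n - k))
    (hs : s ≤ L) : s * n ≤ m * n + s * k := by
  have hr := Nat.div_mul_le_self (m * k) (n - k)
  obtain ⟨d, rfl⟩ := Nat.exists_eq_add_of_le hkn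
  rw [Nat.add_sub_cancel_left] at hL hr
  subst hL
  nlinarith

/-- If `k ∣ δ`, `m = δ/k`, `L = δ/k + ⌊δ/(n-k)⌋`, and every non-trivially-zero
full-size minor of the `L`-th truncated sliding generator matrix `G_L^c`
(column indices `t_1 < … < t_{(L+1)k}` with `t_{sk+1} > sn` for `s = 1, …, L`)
is nonzero, then `G(z)` is left prime (hence generates a noncatastrophic code). -/
theorem stmt14 {F : Type*} [Field F] (n k δ m L : ℕ) (hk0 : 0 < k) (hk : k < n)
    (hdvd : k ∣ δ) (hm : m = δ / k)
    (hL : L = δ / k + δ / (n - k))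
    (G : ℕ → Matrix (Fin k) (Fin n) F)
    (hGm : ∀ s, m < s → G s = 0)
    (Gc : Matrix (Fin ((L + 1) * k)) (Fin ((L + 1) * n)) F)
    (hGc : ∀ (i : Fin ((L + 1) * k)) (j : Fin ((L + 1) * n)),
      Gc i j =
        if (i : ℕ) / k ≤ (j : ℕ) / n then
          G ((j : ℕ) / n - (i : ℕ) / k)
            ⟨(i : ℕ) % k, Nat.mod_lt _ (by omega)⟩
            ⟨(j : ℕ) % n, Nat.mod_lt _ (by omega)⟩
        else 0)
    (hminors : ∀ t : Fin ((L + 1) * k) → Fin ((L + 1) * n),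
      StrictMono t →
      (∀ s, 1 ≤ s → s ≤ L →
        ∀ i : Fin ((L + 1) * k), (i : ℕ) = s * k → s * n ≤ (t i : ℕ)) →
      (Gc.submatrix id t).det ≠ 0) :
    ∀ GP : Matrix (Fin k) (Fin n) (Polynomial F),
      (∀ a b, GP a b = ∑ s ∈ Finset.range (m + 1), Polynomial.C (G s a b) * Polynomial.X ^ s) →
      IsLeftPrimeMat GP := by
  intro GP hGP
  have hL' : L = m + m * k / (n - k) := by rw [hL, hm, Nat.div_mul_cancel hdvd]
  have hGP' : GP = polyMatrix G m := Matrix.ext hGP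
  have hGc' : Gc = (slidingGenMatrix G L).submatrix finProdFinEquiv.symm finProdFinEquiv.symm := by
    ext i j
    rw [hGc]
    rfl
  have hfit := sliding_window_fits hk hL'
  let t : Fin ((L + 1) * k) → Fin ((L + 1) * n) := fun i => ⟨m * n + i, by omega⟩
  have hdet := hminors t (fun i j hij => by simpa [t] using hij) fun s _ hs i hi => by
    simpa [t, hi] using sliding_window_admissible hk.le hL' hs
  rw [hGc', submatrix_submatrix, ← det_submatrix_equiv_self finProdFinEquiv, submatrix_submatrix,
    Function.comp_id, Equiv.symm_comp_self] at hdet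
  obtain ⟨R, hR⟩ := exists_polyMatrix_mul_eq_one hGm
    (c := finProdFinEquiv.symm ∘ t ∘ finProdFinEquiv) (fun i => by
      simp [t, finProdFinEquiv_symm_apply, Nat.le_div_iff_mul_le (show 0 < n by omega)]) hdet
  exact hGP' ▸ isLeftPrimeMat_of_mul_eq_one hR
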